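/- Let D be an n×n strict circular Robinson dissimilarity matrix, and let I and J be disjoint arcs of [n], each containing at least 2 and at most n−2 elements. If both matrices (i,j) ↦ D(σ_I(i), σ_I(j)) and (i,j) ↦ D(σ_J(i), σ_J(j)) are circular Robinson, then J = Iᶜ. (In particular, among any family of pairwise disjoint arcs of size at least 2 no two of which are complementary, at most one arc reversal can produce a Robinson ordering.) -/

import Mathlib

/-- The standard cyclic order on `Fin n`. -/
def CycOrd {n : ℕ} (i j k : Fin n) : Prop :=
  (i < j ∧ j < k) ∨ (j < k ∧ k < i) ∨ (k < i ∧ i < j)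

/-- `i,j,k,l` are pairwise distinct and cyclically ordered. -/
def CycOrd4 {n : ℕ} (i j k l : Fin n) : Prop :=
  i ≠ j ∧ i ≠ k ∧ i ≠ l ∧ j ≠ k ∧ j ≠ l ∧ k ≠ l ∧ CycOrd i j k ∧ CycOrd i k l

/-- `D` is a dissimilarity matrix. -/
def IsDissim {n : ℕ} (D : Fin n → Fin n → ℝ) : Prop :=
  (∀ i j, D i j = D j i) ∧ (∀ i j, 0 ≤ D i j) ∧ (∀ i, D i i = 0)

/-- `D` is a circular Robinson matrix. -/
def CircRobinson {n : ℕ} (D : Fin n → Fin n → ℝ) : Prop :=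
  ∀ i j k l : Fin n, CycOrd4 i j k l → min (D j k) (D k l) ≤ D i k

/-- `D` is a strict circular Robinson matrix. -/
def StrictCircRobinson {n : ℕ} (D : Fin n → Fin n → ℝ) : Prop :=
  ∀ i j k l : Fin n, CycOrd4 i j k l → min (D j k) (D k l) < D i k

open Fin.NatCast in
/-- The arc `{a, a+1, …, a+k}` (mod `n`) of `Fin n`. -/
def arcSet (n : ℕ) [NeZero n] (a : Fin n) (k : ℕ) : Set (Fin n) :=
  {x | ∃ t : ℕ, t ≤ k ∧ x = a + (t : Fin n)}

open Fin.NatCast in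
open Classical in
/-- The permutation of `Fin n` reversing the arc `{a, …, a+k}`. -/
noncomputable def arcRev (n : ℕ) [NeZero n] (a : Fin n) (k : ℕ) (x : Fin n) : Fin n :=
  if (∃ t : ℕ, t ≤ k ∧ x = a + (t : Fin n)) then a + (k : Fin n) - (x - a) else x

/-!
Reversing an arc `[b, b+k]` swaps its endpoints and fixes every point outside it. On a cyclically
ordered quadruple `b, b+k, u, v` with `u, v` outside the arc, the strict Robinson inequality of `D`
and the Robinson inequality of the reversed matrix together force `D u v < D b u`, and likewise
`D u v < D (b+k) v`.

Write `J = [c, c+m]`. If a point `p` lay strictly between the end of `I = [a, a+k]` and `c`, the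
first inequality for `I` (with `u, v = p, c+m`) and the second for `J` (with `u, v = a, p`) would give
`D p (c+m) < D a p < D (c+m) p`, contradicting symmetry. Hence `J` starts right after `I`, and by the
same argument `I` starts right after `J`.
-/

open Fin.NatCast Fin.CommRing

lemma lt_of_min_lt_of_min_le {α : Type*} [LinearOrder α] {a b c : α}
    (h₁ : min c b < a) (h₂ : min c a ≤ b) : c < a := by
  by_contra! h
  rw [min_eq_right h] at h₂
  exact (le_min h h₂).not_gt h₁

namespace Fin

variable {n : ℕ} [NeZero n]

lemma val_add_natCast_eq_or {b : Fin n} {t : ℕ} (ht : t < n) :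
    (b + t).val = b.val + t ∨ (b + t).val + n = b.val + t := by
  rw [val_add_eq_ite, val_natCast, Nat.mod_eq_of_lt ht]
  split_ifs <;> omega

lemma add_natCast_add_natCast_sub (a : Fin n) {d : ℕ} (hd : d ≤ n) :
    a + d + ((n - d : ℕ) : Fin n) = a := by
  rw [add_assoc, ← Nat.cast_add, Nat.add_sub_cancel' hd, natCast_self, add_zero]

lemma val_add_natCast_sub_add_natCast (a : Fin n) {d t : ℕ} (hd : d ≤ n) :
    ((a + t) - (a + d) : Fin n).val = (t + (n - d)) % n := by
  have hneg : ((n - d : ℕ) : Fin n) = -(d : Fin n) := by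
    rw [eq_neg_iff_add_eq_zero, ← Nat.cast_add, Nat.sub_add_cancel hd, natCast_self]
  rw [show (a + t) - (a + d) = ((t + (n - d) : ℕ) : Fin n) by rw [Nat.cast_add, hneg]; ring,
    val_natCast]

end Fin

section CyclicOrder

variable {n : ℕ}

lemma CycOrd4.rotate {i j k l : Fin n} (h : CycOrd4 i j k l) : CycOrd4 j k l i := by
  simp only [CycOrd4, CycOrd, Fin.lt_def, ne_eq, Fin.ext_iff] at h ⊢
  omega

lemma cycOrd4_add_natCast [NeZero n] (b : Fin n) {t₁ t₂ t₃ : ℕ}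
    (h₁ : 0 < t₁) (h₁₂ : t₁ < t₂) (h₂₃ : t₂ < t₃) (h₃ : t₃ < n) :
    CycOrd4 b (b + t₁) (b + t₂) (b + t₃) := by
  have d₁ := Fin.val_add_natCast_eq_or (b := b) (by omega : t₁ < n)
  have d₂ := Fin.val_add_natCast_eq_or (b := b) (by omega : t₂ < n)
  have d₃ := Fin.val_add_natCast_eq_or (b := b) h₃
  have := (b + t₁).isLt
  have := (b + t₂).isLt
  have := (b + t₃).isLt
  simp only [CycOrd4, CycOrd, Fin.lt_def, ne_eq, Fin.ext_iff]
  generalize (b + t₁).val = x₁ at *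
  generalize (b + t₂).val = x₂ at *
  generalize (b + t₃).val = x₃ at *
  omega

end CyclicOrder

section Arcs

variable {n : ℕ} [NeZero n]

lemma mem_arcSet_iff {b x : Fin n} {k : ℕ} : x ∈ arcSet n b k ↔ (x - b).val ≤ k := by
  constructor
  · rintro ⟨t, ht, rfl⟩
    rw [add_sub_cancel_left, Fin.val_natCast]
    exact (Nat.mod_le t n).trans ht
  · intro h
    exact ⟨(x - b).val, h, by rw [Fin.cast_val_eq_self, add_sub_cancel]⟩

lemma self_mem_arcSet (b : Fin n) (k : ℕ) : b ∈ arcSet n b k := ⟨0, k.zero_le, by simp⟩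

lemma add_natCast_mem_arcSet_add_iff {a : Fin n} {d m t : ℕ} (hdm : d + m < n) (ht : t < n) :
    a + t ∈ arcSet n (a + d) m ↔ d ≤ t ∧ t ≤ d + m := by
  rw [mem_arcSet_iff, Fin.val_add_natCast_sub_add_natCast a (by omega)]
  rcases le_or_gt d t with h | h
  · rw [show t + (n - d) = t - d + n by omega, Nat.add_mod_right, Nat.mod_eq_of_lt (by omega)]
    omega
  · rw [Nat.mod_eq_of_lt (by omega)]
    omega

lemma add_natCast_mem_arcSet_iff {a : Fin n} {k t : ℕ} (hk : k < n) (ht : t < n) :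
    a + t ∈ arcSet n a k ↔ t ≤ k := by
  simpa using add_natCast_mem_arcSet_add_iff (a := a) (d := 0) (by simpa using hk) ht

lemma exists_offset_of_disjoint_arcSet {a c : Fin n} {k m : ℕ}
    (h : Disjoint (arcSet n a k) (arcSet n c m)) : ∃ d : ℕ, k < d ∧ d + m < n ∧ c = a + d := by
  obtain ⟨d, hdn, rfl⟩ : ∃ d < n, c = a + d :=
    ⟨(c - a).val, (c - a).isLt, by rw [Fin.cast_val_eq_self, add_sub_cancel]⟩
  refine ⟨d, ?_, ?_, rfl⟩
  · by_contra! hd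
    exact Set.disjoint_left.1 h ⟨d, hd, rfl⟩ (self_mem_arcSet _ m)
  · by_contra! hd
    refine Set.disjoint_left.1 h (self_mem_arcSet a k) ⟨n - d, by omega, ?_⟩
    rw [Fin.add_natCast_add_natCast_sub a hdn.le]

lemma arcSet_add_natCast_eq_compl {a : Fin n} {k m : ℕ} (h : k + 1 + m + 1 = n) :
    arcSet n (a + (k + 1 : ℕ)) m = (arcSet n a k)ᶜ := by
  ext x
  obtain ⟨t, ht, rfl⟩ : ∃ t < n, x = a + t :=
    ⟨(x - a).val, (x - a).isLt, by rw [Fin.cast_val_eq_self, add_sub_cancel]⟩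
  rw [Set.mem_compl_iff, add_natCast_mem_arcSet_add_iff (by omega) ht,
    add_natCast_mem_arcSet_iff (by omega) ht]
  omega

lemma arcRev_of_notMem {b x : Fin n} {k : ℕ} (hx : x ∉ arcSet n b k) : arcRev n b k x = x :=
  if_neg hx

lemma arcRev_self (b : Fin n) (k : ℕ) : arcRev n b k b = b + k := by
  rw [arcRev, if_pos ⟨0, k.zero_le, by simp⟩, sub_self, sub_zero]

lemma arcRev_add_natCast (b : Fin n) (k : ℕ) : arcRev n b k (b + k) = b := by
  rw [arcRev, if_pos ⟨k, le_rfl, rfl⟩]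
  ring

end Arcs

section Robinson

variable {n : ℕ} [NeZero n] {D : Fin n → Fin n → ℝ}

lemma StrictCircRobinson.lt_of_circRobinson_arcRev (hsym : ∀ i j, D i j = D j i)
    (hR : StrictCircRobinson D) {b : Fin n} {k : ℕ}
    (hI : CircRobinson fun i j => D (arcRev n b k i) (arcRev n b k j))
    {u v : Fin n} (hu : u ∉ arcSet n b k) (hv : v ∉ arcSet n b k) (h : CycOrd4 b (b + k) u v) :
    D u v < D b u ∧ D u v < D (b + k) v := by
  have s₁ := hR _ _ _ _ h
  have s₂ := hR _ _ _ _ h.rotate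
  have r₁ := hI _ _ _ _ h
  have r₂ := hI _ _ _ _ h.rotate
  simp only [arcRev_self, arcRev_add_natCast, arcRev_of_notMem hu, arcRev_of_notMem hv] at r₁ r₂
  rw [min_comm] at s₁ r₁
  rw [hsym v b] at s₂
  rw [hsym v (b + k)] at r₂
  exact ⟨lt_of_min_lt_of_min_le s₁ r₁, lt_of_min_lt_of_min_le s₂ r₂⟩

lemma StrictCircRobinson.le_succ_of_circRobinson_arcRev (hsym : ∀ i j, D i j = D j i)
    (hR : StrictCircRobinson D) {a : Fin n} {k m d : ℕ} (hk : 1 ≤ k) (hm : 1 ≤ m)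
    (hdm : d + m < n)
    (hI : CircRobinson fun i j => D (arcRev n a k i) (arcRev n a k j))
    (hJ : CircRobinson fun i j => D (arcRev n (a + d) m i) (arcRev n (a + d) m j)) :
    d ≤ k + 1 := by
  by_contra! hgap
  set p : Fin n := a + (k + 1 : ℕ)
  have hend : a + ((d + m : ℕ) : Fin n) = a + d + m := by rw [Nat.cast_add, add_assoc]
  have hpI : p ∉ arcSet n a k := by rw [add_natCast_mem_arcSet_iff] <;> omega
  have hpJ : p ∉ arcSet n (a + d) m := by rw [add_natCast_mem_arcSet_add_iff] <;> omega
  have hendI : a + d + m ∉ arcSet n a k := by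
    rw [← hend, add_natCast_mem_arcSet_iff] <;> omega
  have haJ : a ∉ arcSet n (a + d) m := by
    simpa using (add_natCast_mem_arcSet_add_iff (a := a) (t := 0) hdm (by omega)).not.2 (by omega)
  have hqI : CycOrd4 a (a + k) p (a + d + m : Fin n) := by
    rw [← hend]; exact cycOrd4_add_natCast a (by omega) (by omega) (by omega) hdm
  have hqJ : CycOrd4 (a + d : Fin n) (a + d + m) a p := by
    rw [← hend]; exact (cycOrd4_add_natCast a (by omega) hgap (by omega) hdm).rotate.rotate
  have h₁ := (hR.lt_of_circRobinson_arcRev hsym hI hpI hendI hqI).1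
  have h₂ := (hR.lt_of_circRobinson_arcRev hsym hJ haJ hpJ hqJ).2
  linarith [hsym p (a + d + m)]

end Robinson

theorem statement14_general (n : ℕ) [NeZero n] (D : Fin n → Fin n → ℝ)
    (hD : IsDissim D) (hR : StrictCircRobinson D)
    (a c : Fin n) (k m : ℕ)
    (hk1 : 1 ≤ k) (hm1 : 1 ≤ m)
    (hdisj : Disjoint (arcSet n a k) (arcSet n c m))
    (hI : CircRobinson fun i j => D (arcRev n a k i) (arcRev n a k j))
    (hJ : CircRobinson fun i j => D (arcRev n c m i) (arcRev n c m j)) :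
    arcSet n c m = (arcSet n a k)ᶜ := by
  obtain ⟨hsym, -, -⟩ := hD
  obtain ⟨d, hkd, hdm, rfl⟩ := exists_offset_of_disjoint_arcSet hdisj
  obtain rfl : d = k + 1 :=
    le_antisymm (hR.le_succ_of_circRobinson_arcRev hsym hk1 hm1 hdm hI hJ) hkd
  have hJI : n - (k + 1) ≤ m + 1 := by
    -- `I` is also the arc at offset `n - (k + 1)` from the start of `J`
    rw [← Fin.add_natCast_add_natCast_sub a (by omega : k + 1 ≤ n)] at hI
    exact hR.le_succ_of_circRobinson_arcRev hsym hm1 hk1 (by omega) hJ hI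
  exact arcSet_add_natCast_eq_compl (by omega)

/-- For a strict circular Robinson matrix, among two disjoint arcs of size between
2 and n-2, if reversing either of them yields a circular Robinson matrix then the
two arcs are complementary. -/
theorem statement14 (n : ℕ) [NeZero n] (D : Fin n → Fin n → ℝ)
    (hD : IsDissim D) (hR : StrictCircRobinson D)
    (a c : Fin n) (k m : ℕ)
    (hk1 : 1 ≤ k) (hk2 : k + 1 ≤ n - 2) (hm1 : 1 ≤ m) (hm2 : m + 1 ≤ n - 2)
    (hdisj : Disjoint (arcSet n a k) (arcSet n c m))
    (hI : CircRobinson fun i j => D (arcRev n a k i) (arcRev n a k j))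
    (hJ : CircRobinson fun i j => D (arcRev n c m i) (arcRev n c m j)) :
    arcSet n c m = (arcSet n a k)ᶜ :=
  statement14_general n D hD hR a c k m hk1 hm1 hdisj hI hJ
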